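/- arXiv:2312.06814 — 2 statements merged into one kernel-verified Lean document; each statement's English description precedes it below -/
import Mathlib

section
/- Let A be a 3×3 entrywise nonnegative irreducible real matrix whose diagonal entries are all strictly less than 1 and such that det(I₃ − A) > 0. Then the spectral radius of A is strictly less than 1. -/
open Matrix

/-!
If an eigenvalue `μ` of `A` had `‖μ‖ ≥ 1`, the moduli `w` of an eigenvector would satisfy
`w ≤ ‖μ‖ w ≤ A w` by the triangle inequality. Irreducibility spreads such a `w` to a strictly
positive `u` with `u ≤ A u`, and for a nonnegative `3 × 3` matrix with diagonal entries below `1`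
such a `u` forces `det (1 - A) ≤ 0`.
-/

/-- The spectral radius of a real square matrix. -/
noncomputable def specRad {n : ℕ} (A : Matrix (Fin n) (Fin n) ℝ) : ℝ :=
  sSup ((fun z : ℂ => ‖z‖) '' spectrum ℂ (A.map (algebraMap ℝ ℂ)))

/-- A nonnegative matrix is irreducible if its directed graph (with an edge `i → j`
whenever `A i j > 0`) is strongly connected. -/
def MatIrreducible {n : ℕ} (A : Matrix (Fin n) (Fin n) ℝ) : Prop :=
  ∀ i j, Relation.TransGen (fun a b => 0 < A a b) i j

namespace Matrix

section OrderedRing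

variable {ι R : Type*} [Fintype ι] [CommRing R] [PartialOrder R] [IsOrderedRing R]
  {A : Matrix ι ι R}

lemma mulVec_nonneg (hA : ∀ i j, 0 ≤ A i j) {v : ι → R} (hv : 0 ≤ v) : 0 ≤ A *ᵥ v :=
  fun i => Finset.sum_nonneg fun j _ => mul_nonneg (hA i j) (hv j)

lemma mulVec_mono (hA : ∀ i j, 0 ≤ A i j) {v w : ι → R} (h : v ≤ w) : A *ᵥ v ≤ A *ᵥ w := by
  have := mulVec_nonneg hA (sub_nonneg.mpr h)
  rwa [mulVec_sub, sub_nonneg] at this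

lemma mul_le_mulVec_apply (hA : ∀ i j, 0 ≤ A i j) {v : ι → R} (hv : 0 ≤ v) (i j : ι) :
    A i j * v j ≤ (A *ᵥ v) i :=
  Finset.single_le_sum (f := fun j => A i j * v j) (fun j _ => mul_nonneg (hA i j) (hv j))
    (Finset.mem_univ j)

lemma pow_mulVec_le_mulVec_pow_mulVec [DecidableEq ι] (hA : ∀ i j, 0 ≤ A i j) {w : ι → R}
    (hw : w ≤ A *ᵥ w) (k : ℕ) : A ^ k *ᵥ w ≤ A *ᵥ (A ^ k *ᵥ w) := by
  rw [mulVec_mulVec, ← pow_succ', pow_succ, ← mulVec_mulVec]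
  exact mulVec_mono (pow_apply_nonneg hA k) hw

end OrderedRing

-- `u = ∑ᵢ A ^ kᵢ *ᵥ w`, where `A ^ kᵢ` carries a positive entry of `w` to the index `i`.
lemma exists_pos_le_mulVec_of_le_mulVec {ι R : Type*} [Fintype ι] [DecidableEq ι] [CommRing R]
    [LinearOrder R] [IsStrictOrderedRing R] {A : Matrix ι ι R} (hA : ∀ i j, 0 ≤ A i j)
    (hconn : ∀ i j, ∃ k, 0 < (A ^ k) i j) {w : ι → R} (hw : 0 ≤ w) (hw0 : w ≠ 0)
    (hAw : w ≤ A *ᵥ w) : ∃ u : ι → R, (∀ i, 0 < u i) ∧ u ≤ A *ᵥ u := by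
  obtain ⟨j, hj⟩ : ∃ j, 0 < w j := by
    by_contra! h
    exact hw0 (funext fun j => le_antisymm (h j) (hw j))
  choose k hk using fun i => hconn i j
  have hterm : ∀ l, 0 ≤ A ^ k l *ᵥ w := fun l => mulVec_nonneg (pow_apply_nonneg hA _) hw
  refine ⟨∑ l, A ^ k l *ᵥ w, fun i => ?_, ?_⟩
  · calc 0 < (A ^ k i) i j * w j := mul_pos (hk i) hj
      _ ≤ (A ^ k i *ᵥ w) i := mul_le_mulVec_apply (pow_apply_nonneg hA _) hw i j
      _ ≤ (∑ l, A ^ k l *ᵥ w) i := by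
        rw [Finset.sum_apply]
        exact Finset.single_le_sum (f := fun l => (A ^ k l *ᵥ w) i) (fun l _ => hterm l i)
          (Finset.mem_univ i)
  · rw [mulVec_sum]
    exact Finset.sum_le_sum fun l _ => pow_mulVec_le_mulVec_pow_mulVec hA hAw (k l)

lemma exists_mulVec_eq_smul_of_mem_spectrum {ι K : Type*} [Fintype ι] [DecidableEq ι] [Field K]
    {M : Matrix ι ι K} {μ : K} (hμ : μ ∈ spectrum K M) : ∃ v ≠ 0, M *ᵥ v = μ • v := by
  rw [← spectrum_toLin', ← Module.End.hasEigenvalue_iff_mem_spectrum] at hμ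
  obtain ⟨v, hv⟩ := hμ.exists_hasEigenvector
  exact ⟨v, hv.2, by simpa using Module.End.mem_eigenspace_iff.mp hv.1⟩

lemma norm_smul_le_mulVec_norm {ι : Type*} [Fintype ι] {A : Matrix ι ι ℝ}
    (hA : ∀ i j, 0 ≤ A i j) {μ : ℂ} {v : ι → ℂ} (hv : A.map (algebraMap ℝ ℂ) *ᵥ v = μ • v) :
    ‖μ‖ • (fun i => ‖v i‖) ≤ A *ᵥ fun i => ‖v i‖ := fun i =>
  calc ‖μ‖ * ‖v i‖ = ‖∑ j, (A i j : ℂ) * v j‖ := by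
        rw [← norm_mul, ← smul_eq_mul, ← Pi.smul_apply, ← hv]; rfl
    _ ≤ ∑ j, ‖(A i j : ℂ) * v j‖ := norm_sum_le _ _
    _ = ∑ j, A i j * ‖v j‖ := by
        simp only [norm_mul, Complex.norm_real, Real.norm_of_nonneg (hA _ _)]

lemma det_one_sub_fin_three {R : Type*} [CommRing R] (A : Matrix (Fin 3) (Fin 3) R) :
    (1 - A).det = (1 - A 0 0) * (1 - A 1 1) * (1 - A 2 2)
      - (1 - A 0 0) * (A 1 2 * A 2 1) - (1 - A 1 1) * (A 0 2 * A 2 0)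
      - (1 - A 2 2) * (A 0 1 * A 1 0) - A 0 1 * A 1 2 * A 2 0 - A 0 2 * A 1 0 * A 2 1 := by
  rw [det_fin_three]
  simp only [Matrix.sub_apply, one_apply_eq, ne_eq, Fin.reduceEq, not_false_eq_true,
    one_apply_ne]
  ring

end Matrix

section

variable {R : Type*} [Field R] [LinearOrder R] [IsStrictOrderedRing R]

-- `t ↦ t₀ t₁ t₂ - ∑ Pᵢ tᵢ - C` is affine in each coordinate and vanishes at `r`: raise the
-- coordinates of `x` to those of `r` one at a time, stopping as soon as the coefficient of the
-- next one is nonpositive.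
lemma mul_mul_le_of_le_of_mul_mul_eq {x₀ x₁ x₂ r₀ r₁ r₂ P₀ P₁ P₂ C : R}
    (hx₀ : 0 ≤ x₀) (hx₁ : 0 ≤ x₁) (hx₂ : 0 ≤ x₂)
    (hP₀ : 0 ≤ P₀) (hP₁ : 0 ≤ P₁) (hP₂ : 0 ≤ P₂) (hC : 0 ≤ C)
    (h₀ : x₀ ≤ r₀) (h₁ : x₁ ≤ r₁) (h₂ : x₂ ≤ r₂)
    (hr : r₀ * r₁ * r₂ = P₀ * r₀ + P₁ * r₁ + P₂ * r₂ + C) :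
    x₀ * x₁ * x₂ ≤ P₀ * x₀ + P₁ * x₁ + P₂ * x₂ + C := by
  have hr₀ : 0 ≤ r₀ := hx₀.trans h₀
  have hr₁ : 0 ≤ r₁ := hx₁.trans h₁
  rcases le_or_gt (x₁ * x₂) P₀ with c₀ | c₀
  · nlinarith [mul_le_mul_of_nonneg_left c₀ hx₀, mul_nonneg hP₁ hx₁, mul_nonneg hP₂ hx₂]
  have e₀ := mul_le_mul_of_nonneg_right h₀ (sub_nonneg.mpr c₀.le)
  rcases le_or_gt (r₀ * x₂) P₁ with c₁ | c₁
  · nlinarith [mul_le_mul_of_nonneg_left c₁ hx₁, mul_nonneg hP₀ hr₀, mul_nonneg hP₂ hx₂]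
  have e₁ := mul_le_mul_of_nonneg_right h₁ (sub_nonneg.mpr c₁.le)
  rcases le_or_gt (r₀ * r₁) P₂ with c₂ | c₂
  · nlinarith [mul_le_mul_of_nonneg_left c₂ hx₂, mul_nonneg hP₀ hr₀, mul_nonneg hP₁ hr₁]
  have e₂ := mul_le_mul_of_nonneg_right h₂ (sub_nonneg.mpr c₂.le)
  nlinarith

-- With `xᵢ = (1 - Aᵢᵢ) uᵢ` and `rᵢ = ∑_{j ≠ i} Aᵢⱼ uⱼ`, the previous lemma reads
-- `det (1 - A) * u₀ u₁ u₂ ≤ 0`.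
lemma Matrix.det_one_sub_nonpos_of_le_mulVec (A : Matrix (Fin 3) (Fin 3) R)
    (hA : ∀ i j, 0 ≤ A i j) (hdiag : ∀ i, A i i < 1)
    {u : Fin 3 → R} (hu : ∀ i, 0 < u i) (hAu : u ≤ A *ᵥ u) :
    (1 - A).det ≤ 0 := by
  have hu' : ∀ i, 0 ≤ u i := fun i => (hu i).le
  have hx : ∀ i, 0 ≤ (1 - A i i) * u i := fun i => mul_nonneg (sub_nonneg.2 (hdiag i).le) (hu' i)
  have hrow : ∀ i, u i ≤ ∑ j, A i j * u j := hAu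
  simp only [Fin.sum_univ_three] at hrow
  have h₀ := hrow 0
  have h₁ := hrow 1
  have h₂ := hrow 2
  have key := mul_mul_le_of_le_of_mul_mul_eq
    (x₀ := (1 - A 0 0) * u 0) (x₁ := (1 - A 1 1) * u 1) (x₂ := (1 - A 2 2) * u 2)
    (r₀ := A 0 1 * u 1 + A 0 2 * u 2) (r₁ := A 1 0 * u 0 + A 1 2 * u 2)
    (r₂ := A 2 0 * u 0 + A 2 1 * u 1)
    (P₀ := A 1 2 * A 2 1 * (u 1 * u 2)) (P₁ := A 0 2 * A 2 0 * (u 0 * u 2))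
    (P₂ := A 0 1 * A 1 0 * (u 0 * u 1))
    (C := (A 0 1 * A 1 2 * A 2 0 + A 0 2 * A 1 0 * A 2 1) * (u 0 * u 1 * u 2))
    (hx 0) (hx 1) (hx 2)
    (mul_nonneg (mul_nonneg (hA 1 2) (hA 2 1)) (mul_nonneg (hu' 1) (hu' 2)))
    (mul_nonneg (mul_nonneg (hA 0 2) (hA 2 0)) (mul_nonneg (hu' 0) (hu' 2)))
    (mul_nonneg (mul_nonneg (hA 0 1) (hA 1 0)) (mul_nonneg (hu' 0) (hu' 1)))
    (mul_nonneg (add_nonneg (mul_nonneg (mul_nonneg (hA 0 1) (hA 1 2)) (hA 2 0))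
      (mul_nonneg (mul_nonneg (hA 0 2) (hA 1 0)) (hA 2 1)))
      (mul_nonneg (mul_nonneg (hu' 0) (hu' 1)) (hu' 2)))
    (by linarith) (by linarith) (by linarith) (by ring)
  have hdet : (1 - A).det * (u 0 * u 1 * u 2) ≤ 0 := by
    rw [det_one_sub_fin_three]
    linear_combination key
  exact nonpos_of_mul_nonpos_left hdet (mul_pos (mul_pos (hu 0) (hu 1)) (hu 2))

end

lemma MatIrreducible.exists_pow_apply_pos {n : ℕ} {A : Matrix (Fin n) (Fin n) ℝ}
    (hA : ∀ i j, 0 ≤ A i j) (hirr : MatIrreducible A) (i j : Fin n) :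
    ∃ k, 0 < (A ^ k) i j := by
  induction hirr i j with
  | single h => exact ⟨1, by simpa using h⟩
  | @tail b c _ hbc ih =>
    obtain ⟨k, hk⟩ := ih
    refine ⟨k + 1, ?_⟩
    rw [pow_succ, mul_apply]
    exact Finset.sum_pos' (fun l _ => mul_nonneg (pow_apply_nonneg hA k i l) (hA l c))
      ⟨b, Finset.mem_univ b, mul_pos hk hbc⟩

lemma specRad_lt_of_forall_norm_lt {n : ℕ} [NeZero n] (A : Matrix (Fin n) (Fin n) ℝ) {c : ℝ}
    (h : ∀ μ ∈ spectrum ℂ (A.map (algebraMap ℝ ℂ)), ‖μ‖ < c) : specRad A < c := by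
  have hne := spectrum.nonempty_of_isAlgClosed_of_finiteDimensional ℂ (A.map (algebraMap ℝ ℂ))
  rw [specRad, ((finite_spectrum _).image _).csSup_lt_iff (hne.image _)]
  rintro _ ⟨μ, hμ, rfl⟩
  exact h μ hμ

theorem specRad_lt_one_of_diag_lt_one_det_pos
    (A : Matrix (Fin 3) (Fin 3) ℝ)
    (hA : ∀ i j, 0 ≤ A i j) (hirr : MatIrreducible A)
    (hdiag : ∀ i, A i i < 1)
    (hdet : 0 < ((1 : Matrix (Fin 3) (Fin 3) ℝ) - A).det) :
    specRad A < 1 := by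
  refine specRad_lt_of_forall_norm_lt A fun μ hμ => ?_
  by_contra! hμ1
  obtain ⟨v, hv0, hv⟩ := exists_mulVec_eq_smul_of_mem_spectrum hμ
  set w : Fin 3 → ℝ := fun i => ‖v i‖
  have hw : 0 ≤ w := fun i => norm_nonneg (v i)
  have hw0 : w ≠ 0 := fun h => hv0 (funext fun i => norm_eq_zero.mp (congrFun h i))
  have hAw : w ≤ A *ᵥ w := fun i =>
    (le_mul_of_one_le_left (hw i) hμ1).trans (norm_smul_le_mulVec_norm hA hv i)
  obtain ⟨u, hu, hAu⟩ :=
    exists_pos_le_mulVec_of_le_mulVec hA (hirr.exists_pow_apply_pos hA) hw hw0 hAw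
  exact (det_one_sub_nonpos_of_le_mulVec A hA hdiag hu hAu).not_gt hdet
end

section
/- Let g(λ) = (λ − 1 + αμ)·q(λ) − α³L³η₂η₄ where q(λ) = λ² − λ(η₁ + η₃ + αLη₄) + η₁(η₃ + αLη₄) − αLη₂(2pβ₄^{n_c} + αLη₄), with all parameters nonnegative, μ ≤ L, αL ≤ 1. Let λ̂ be the larger root of q and λ_u = max{1 − αμ/2, λ̂ + √(2αLκη₂η₄)} with κ = L/μ. Then g(λ_u) ≥ α²L²η₂η₄(1 − αL) ≥ 0, and g is nondecreasing on [λ_u, ∞). -/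
theorem char_poly_estimate
    (α μ L κ : ℝ) (hα : 0 < α) (hμ : 0 < μ) (hμL : μ ≤ L) (hαL : α * L ≤ 1)
    (hκ : κ = L / μ)
    (η₁ η₂ η₃ η₄ p β₄ : ℝ) (nc : ℕ) (hnc : 1 ≤ nc)
    (hη₁ : 0 ≤ η₁ ∧ η₁ ≤ 1) (hη₂ : 0 ≤ η₂ ∧ η₂ ≤ 1)
    (hη₃ : 0 ≤ η₃ ∧ η₃ ≤ 1) (hη₄ : 0 ≤ η₄ ∧ η₄ ≤ 1)
    (hp : 0 < p ∧ p < 1) (hβ₄ : 0 ≤ β₄ ∧ β₄ ≤ 1)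
    (q g : ℝ → ℝ)
    (hq : ∀ lam, q lam = lam ^ 2 - lam * (η₁ + η₃ + α * L * η₄)
        + η₁ * (η₃ + α * L * η₄) - α * L * η₂ * (2 * p * β₄ ^ nc + α * L * η₄))
    (hg : ∀ lam, g lam = (lam - 1 + α * μ) * q lam - α ^ 3 * L ^ 3 * η₂ * η₄)
    (lamhat : ℝ)
    (hlamhat : lamhat = (η₁ + η₃ + α * L * η₄
        + Real.sqrt ((η₁ - η₃ - α * L * η₄) ^ 2 + 4 * η₂ * η₄ * α ^ 2 * L ^ 2
            + 8 * p * α * L * η₂ * β₄ ^ nc)) / 2)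
    (lamu : ℝ)
    (hlamu : lamu = max (1 - α * μ / 2) (lamhat + Real.sqrt (2 * α * L * κ * η₂ * η₄))) :
    (α ^ 2 * L ^ 2 * η₂ * η₄ * (1 - α * L) ≤ g lamu
      ∧ 0 ≤ α ^ 2 * L ^ 2 * η₂ * η₄ * (1 - α * L))
      ∧ MonotoneOn g (Set.Ici lamu) := by
  obtain ⟨hη₁0, hη₁1⟩ := hη₁
  obtain ⟨hη₂0, -⟩ := hη₂
  obtain ⟨hη₃0, -⟩ := hη₃
  obtain ⟨hη₄0, -⟩ := hη₄
  obtain ⟨hp0, hp1⟩ := hp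
  obtain ⟨hβ₄0, -⟩ := hβ₄
  have hL : 0 < L := lt_of_lt_of_le hμ hμL
  have hβn : 0 ≤ β₄ ^ nc := pow_nonneg hβ₄0 nc
  have hκ0 : 0 ≤ κ := by rw [hκ]; positivity
  set D : ℝ := (η₁ - η₃ - α * L * η₄) ^ 2 + 4 * η₂ * η₄ * α ^ 2 * L ^ 2
      + 8 * p * α * L * η₂ * β₄ ^ nc with hDdef
  have hD0 : 0 ≤ D := by
    have h1 : 0 ≤ (η₁ - η₃ - α * L * η₄) ^ 2 := sq_nonneg _
    have h2 : 0 ≤ 4 * η₂ * η₄ * α ^ 2 * L ^ 2 := by positivity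
    have h3 : 0 ≤ 8 * p * α * L * η₂ * β₄ ^ nc := by positivity
    linarith
  set sD : ℝ := Real.sqrt D with hsDdef
  have hsD2 : sD ^ 2 = D := Real.sq_sqrt hD0
  have hsD0 : 0 ≤ sD := Real.sqrt_nonneg _
  have hqform : ∀ lam, q lam = (lam - lamhat) ^ 2 + (lam - lamhat) * sD := by
    intro lam
    rw [hq, hlamhat]
    linear_combination ((1:ℝ)/4) * hsD2
  set E : ℝ := 2 * α * L * κ * η₂ * η₄ with hEdef
  have hE0 : 0 ≤ E := by positivity
  set sE : ℝ := Real.sqrt E with hsEdef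
  have hsE2 : sE ^ 2 = E := Real.sq_sqrt hE0
  have hsE0 : 0 ≤ sE := Real.sqrt_nonneg _
  have hlamu1 : 1 - α * μ / 2 ≤ lamu := by rw [hlamu]; exact le_max_left _ _
  have hlamu2 : lamhat + sE ≤ lamu := by rw [hlamu]; exact le_max_right _ _
  have hlamhat_le : lamhat ≤ lamu := by linarith
  have hκμ : κ * μ = L := by rw [hκ]; field_simp
  have hαμ : 0 < α * μ := mul_pos hα hμ
  constructor
  · constructor
    · -- main bound
      have hfac : α * μ / 2 ≤ lamu - 1 + α * μ := by linarith
      have hfac0 : 0 ≤ lamu - 1 + α * μ := by linarith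
      have hsq : sE ^ 2 ≤ (lamu - lamhat) ^ 2 := by
        have h1 : sE ≤ lamu - lamhat := by linarith
        exact pow_le_pow_left₀ hsE0 h1 2
      have hql : E ≤ q lamu := by
        rw [hqform]
        have h3 : 0 ≤ (lamu - lamhat) * sD :=
          mul_nonneg (sub_nonneg.2 hlamhat_le) hsD0
        linarith [hsq, hsE2]
      have hE0' : (0:ℝ) ≤ E := hE0
      have hmul : (α * μ / 2) * E ≤ (lamu - 1 + α * μ) * q lamu :=
        mul_le_mul hfac hql hE0' hfac0
      have key : (α * μ / 2) * E = α ^ 2 * L ^ 2 * η₂ * η₄ := by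
        rw [hEdef, hκ]; field_simp
      rw [hg]
      linarith [hmul, key]
    · have h1 : 0 ≤ (α * L) ^ 2 * (η₂ * η₄) * (1 - α * L) := by
        have : (0:ℝ) ≤ 1 - α * L := by linarith
        positivity
      linarith [h1]
  · intro x hx y hy hxy
    simp only [Set.mem_Ici] at hx hy
    have hx1 : lamhat ≤ x := le_trans hlamhat_le hx
    have hy1 : lamhat ≤ y := le_trans hlamhat_le hy
    have hxc : 0 ≤ x - 1 + α * μ := by
      have : 1 - α * μ / 2 ≤ x := le_trans hlamu1 hx
      linarith
    rw [hg, hg, hqform, hqform]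
    have prod1 : 0 ≤ (y - x) * ((y - lamhat) ^ 2 + (y - lamhat) * sD) := by
      have h2 : 0 ≤ (y - lamhat) ^ 2 + (y - lamhat) * sD :=
        add_nonneg (sq_nonneg _) (mul_nonneg (sub_nonneg.2 hy1) hsD0)
      exact mul_nonneg (by linarith) h2
    have prod2 : 0 ≤ (x - 1 + α * μ) *
        ((y - lamhat) ^ 2 - (x - lamhat) ^ 2 + (y - x) * sD) := by
      have h2 : 0 ≤ (y - lamhat) ^ 2 - (x - lamhat) ^ 2 + (y - x) * sD := by
        have ha : 0 ≤ (y - x) * (y + x - 2 * lamhat) :=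
          mul_nonneg (by linarith) (by linarith)
        have hb : 0 ≤ (y - x) * sD := mul_nonneg (by linarith) hsD0
        linarith [ha, hb]
      exact mul_nonneg hxc h2
    linarith [prod1, prod2]
end
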